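/- There exists a universal constant K > 0 with the following property. Let δ ≥ 0 and let X be a geodesic metric space all of whose geodesic triangles are δ-thin. Let P₀, Q₁, Q₂ ∈ X, let P₁ be a point on the image of a geodesic segment from P₀ to Q₁, and let P₂ be a point on the image of a geodesic segment from P₀ to Q₂. Set t₁ = dist(P₀,P₁), t₂ = dist(P₀,P₂), and t∞ = (dist(P₀,Q₁) + dist(P₀,Q₂) − dist(Q₁,Q₂))/2 (the Gromov product of Q₁ and Q₂ at P₀). Then |dist(P₁,P₂) − (t₁ + t₂ − 2·min(t₁, t₂, t∞))| ≤ K·δ. -/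

import Mathlib

/-!
Write `(x|y)_w` for the Gromov product. A point `P₁` of a geodesic `[P₀, Q₁]` satisfies
`(P₁|Q₁)_{P₀} = t₁`, similarly `(P₂|Q₂)_{P₀} = t₂`; moreover `t∞ = (Q₁|Q₂)_{P₀}` and
`dist P₁ P₂ = t₁ + t₂ - 2 (P₁|P₂)_{P₀}`. So it suffices to show
`|(P₁|P₂)_{P₀} - min t₁ t₂ t∞| ≤ 6δ`, giving `K = 12`. Thin triangles yield the four-point
condition `min ((x|y)_w, (y|z)_w) ≤ (x|z)_w + 3δ`, and each of the two inequalities follows from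
two instances of it, both passing through `(P₁|Q₂)_{P₀}`.
-/

open Metric Set

universe u

/-- `s` is the image of a geodesic segment from `x` to `y`. -/
def IsGeodesicSegment {X : Type*} [MetricSpace X] (x y : X) (s : Set X) : Prop :=
  ∃ γ : ℝ → X, γ 0 = x ∧ γ (dist x y) = y ∧
    (∀ u ∈ Icc (0 : ℝ) (dist x y), ∀ v ∈ Icc (0 : ℝ) (dist x y),
      dist (γ u) (γ v) = |u - v|) ∧
    s = γ '' Icc (0 : ℝ) (dist x y)

/-- A metric space is geodesic: any two points are joined by a geodesic segment. -/
def IsGeodesicMetricSpace (X : Type*) [MetricSpace X] : Prop :=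
  ∀ x y : X, ∃ s : Set X, IsGeodesicSegment x y s

/-- All geodesic triangles of `X` are δ-thin: every point on any side lies within
distance δ of the union of the other two sides. -/
def ThinTriangles (X : Type*) [MetricSpace X] (δ : ℝ) : Prop :=
  ∀ a b c : X, ∀ sab sbc sca : Set X,
    IsGeodesicSegment a b sab → IsGeodesicSegment b c sbc →
    IsGeodesicSegment c a sca →
    ∀ p ∈ sab, ∃ q ∈ sbc ∪ sca, dist p q ≤ δ

noncomputable def gromovProduct {X : Type*} [MetricSpace X] (w x y : X) : ℝ :=
  (dist w x + dist w y - dist x y) / 2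

section GromovProduct

variable {X : Type*} [MetricSpace X]

lemma gromovProduct_comm (w x y : X) : gromovProduct w x y = gromovProduct w y x := by
  unfold gromovProduct
  rw [dist_comm x y, add_comm (dist w x)]

lemma gromovProduct_nonneg (w x y : X) : 0 ≤ gromovProduct w x y := by
  unfold gromovProduct
  linarith [dist_triangle x w y, dist_comm x w]

lemma gromovProduct_le_dist_left (w x y : X) : gromovProduct w x y ≤ dist w x := by
  unfold gromovProduct
  linarith [dist_triangle w x y]

lemma gromovProduct_le_dist_right (w x y : X) : gromovProduct w x y ≤ dist w y :=
  gromovProduct_comm w x y ▸ gromovProduct_le_dist_left w y x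

lemma dist_eq_dist_add_dist_sub_two_mul_gromovProduct (w x y : X) :
    dist x y = dist w x + dist w y - 2 * gromovProduct w x y := by
  unfold gromovProduct
  ring

end GromovProduct

namespace IsGeodesicSegment

variable {X : Type*} [MetricSpace X] {x y : X} {s : Set X}

lemma exists_dist_param (h : IsGeodesicSegment x y s) :
    ∃ γ : ℝ → X, s = γ '' Icc 0 (dist x y) ∧
      ∀ t ∈ Icc 0 (dist x y), dist x (γ t) = t ∧ dist (γ t) y = dist x y - t := by
  obtain ⟨γ, hγ0, hγ1, hiso, rfl⟩ := h
  have h0 : (0 : ℝ) ∈ Icc 0 (dist x y) := ⟨le_rfl, dist_nonneg⟩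
  have h1 : dist x y ∈ Icc 0 (dist x y) := ⟨dist_nonneg, le_rfl⟩
  refine ⟨γ, rfl, fun t ht => ⟨?_, ?_⟩⟩
  · rw [← hγ0, hiso 0 h0 t ht, zero_sub, abs_neg, abs_of_nonneg ht.1]
  · conv_lhs => rw [← hγ1]
    rw [hiso t ht _ h1, abs_sub_comm, abs_of_nonneg (sub_nonneg.2 ht.2)]

lemma exists_mem_dist_eq (h : IsGeodesicSegment x y s) {t : ℝ}
    (ht : t ∈ Icc 0 (dist x y)) : ∃ p ∈ s, dist x p = t ∧ dist p y = dist x y - t := by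
  obtain ⟨γ, rfl, hγ⟩ := h.exists_dist_param
  exact ⟨γ t, mem_image_of_mem γ ht, hγ t ht⟩

lemma dist_add_dist_of_mem (h : IsGeodesicSegment x y s) {p : X} (hp : p ∈ s) :
    dist x p + dist p y = dist x y := by
  obtain ⟨γ, rfl, hγ⟩ := h.exists_dist_param
  obtain ⟨t, ht, rfl⟩ := hp
  rw [(hγ t ht).1, (hγ t ht).2, add_sub_cancel]

lemma gromovProduct_le_dist_of_mem (h : IsGeodesicSegment x y s) {p : X} (hp : p ∈ s)
    (w : X) : gromovProduct w x y ≤ dist w p := by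
  unfold gromovProduct
  linarith [h.dist_add_dist_of_mem hp, dist_triangle w p x, dist_triangle w p y, dist_comm p x]

lemma gromovProduct_eq_dist_of_mem {w : X} (h : IsGeodesicSegment w y s) {p : X}
    (hp : p ∈ s) : gromovProduct w p y = dist w p := by
  unfold gromovProduct
  linarith [h.dist_add_dist_of_mem hp]

end IsGeodesicSegment

section ThinTriangles

variable {X : Type*} [MetricSpace X] {δ : ℝ}

/-- The witness is the point of `[x, y]` at distance `(y|w)_x` from `x`, the "internal point"
of the side `[x, y]` of the triangle `x y w`. -/
lemma exists_mem_dist_le_gromovProduct_add (hgeo : IsGeodesicMetricSpace X)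
    (hthin : ThinTriangles X δ) (w : X) {x y : X} {s : Set X} (hs : IsGeodesicSegment x y s) :
    ∃ p ∈ s, dist w p ≤ gromovProduct w x y + 2 * δ := by
  have ht : gromovProduct x y w ∈ Icc 0 (dist x y) :=
    ⟨gromovProduct_nonneg x y w, gromovProduct_le_dist_left x y w⟩
  obtain ⟨p, hp, hxp, hpy⟩ := hs.exists_mem_dist_eq ht
  refine ⟨p, hp, ?_⟩
  have near : ∀ a q, dist a q + dist q w = dist a w → dist p q ≤ δ →
      dist w p ≤ dist a w - dist a p + 2 * δ := fun a q haw hpq => by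
    linarith [dist_triangle w q p, dist_triangle a q p, dist_comm w q, dist_comm p q]
  obtain ⟨s₂, h₂⟩ := hgeo y w
  obtain ⟨s₃, h₃⟩ := hgeo w x
  obtain ⟨q, hq | hq, hpq⟩ := hthin x y w s s₂ s₃ hs h₂ h₃ p hp
  · have := near y q (h₂.dist_add_dist_of_mem hq) hpq
    unfold gromovProduct at *
    linarith [dist_comm p y, dist_comm w y, dist_comm x w]
  · have hxw : dist x q + dist q w = dist x w := by
      rw [add_comm, dist_comm x q, dist_comm q w, dist_comm x w, h₃.dist_add_dist_of_mem hq]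
    have := near x q hxw hpq
    unfold gromovProduct at *
    linarith [dist_comm w y, dist_comm x w]

lemma min_gromovProduct_le_gromovProduct_add (hgeo : IsGeodesicMetricSpace X)
    (hthin : ThinTriangles X δ) (w x y z : X) :
    min (gromovProduct w x y) (gromovProduct w y z) ≤ gromovProduct w x z + 3 * δ := by
  obtain ⟨sxz, hxz⟩ := hgeo x z
  obtain ⟨szy, hzy⟩ := hgeo z y
  obtain ⟨syx, hyx⟩ := hgeo y x
  obtain ⟨p, hp, hwp⟩ := exists_mem_dist_le_gromovProduct_add hgeo hthin w hxz
  obtain ⟨q, hq | hq, hpq⟩ := hthin x z y sxz szy syx hxz hzy hyx p hp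
  · calc min (gromovProduct w x y) (gromovProduct w y z)
        ≤ gromovProduct w z y := gromovProduct_comm w y z ▸ min_le_right _ _
      _ ≤ dist w q := hzy.gromovProduct_le_dist_of_mem hq w
      _ ≤ gromovProduct w x z + 3 * δ := by linarith [dist_triangle w p q]
  · calc min (gromovProduct w x y) (gromovProduct w y z)
        ≤ gromovProduct w y x := gromovProduct_comm w x y ▸ min_le_left _ _
      _ ≤ dist w q := hyx.gromovProduct_le_dist_of_mem hq w
      _ ≤ gromovProduct w x z + 3 * δ := by linarith [dist_triangle w p q]

section Tripod

variable (hδ : 0 ≤ δ) (hgeo : IsGeodesicMetricSpace X) (hthin : ThinTriangles X δ)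
  {P₀ Q₁ Q₂ P₁ P₂ : X} {s₁ s₂ : Set X}
  (hs₁ : IsGeodesicSegment P₀ Q₁ s₁) (hP₁ : P₁ ∈ s₁)
  (hs₂ : IsGeodesicSegment P₀ Q₂ s₂) (hP₂ : P₂ ∈ s₂)
include hδ hgeo hthin hs₁ hP₁ hs₂ hP₂

lemma min_le_gromovProduct_add :
    min (dist P₀ P₁) (min (dist P₀ P₂) (gromovProduct P₀ Q₁ Q₂))
      ≤ gromovProduct P₀ P₁ P₂ + 6 * δ := by
  set m := min (dist P₀ P₁) (min (dist P₀ P₂) (gromovProduct P₀ Q₁ Q₂))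
  have hm₂ : m ≤ dist P₀ P₂ := (min_le_right _ _).trans (min_le_left _ _)
  have hm₁₂ : m ≤ min (dist P₀ P₁) (gromovProduct P₀ Q₁ Q₂) :=
    min_le_min le_rfl (min_le_right _ _)
  have hP₁Q₂ : m - 3 * δ ≤ gromovProduct P₀ P₁ Q₂ := by
    have h := min_gromovProduct_le_gromovProduct_add hgeo hthin P₀ P₁ Q₁ Q₂
    rw [hs₁.gromovProduct_eq_dist_of_mem hP₁] at h
    linarith
  have h := min_gromovProduct_le_gromovProduct_add hgeo hthin P₀ P₁ Q₂ P₂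
  rw [gromovProduct_comm P₀ Q₂, hs₂.gromovProduct_eq_dist_of_mem hP₂] at h
  have := le_min hP₁Q₂ (show m - 3 * δ ≤ dist P₀ P₂ by linarith)
  linarith

lemma gromovProduct_le_min_add :
    gromovProduct P₀ P₁ P₂
      ≤ min (dist P₀ P₁) (min (dist P₀ P₂) (gromovProduct P₀ Q₁ Q₂)) + 6 * δ := by
  set g := gromovProduct P₀ P₁ P₂
  have hg₁ : g ≤ dist P₀ P₁ := gromovProduct_le_dist_left P₀ P₁ P₂
  have hg₂ : g ≤ dist P₀ P₂ := gromovProduct_le_dist_right P₀ P₁ P₂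
  have hP₁Q₂ : g - 3 * δ ≤ gromovProduct P₀ P₁ Q₂ := by
    have h := min_gromovProduct_le_gromovProduct_add hgeo hthin P₀ P₁ P₂ Q₂
    rw [hs₂.gromovProduct_eq_dist_of_mem hP₂, min_eq_left hg₂] at h
    linarith
  have hQ₁Q₂ : g - 6 * δ ≤ gromovProduct P₀ Q₁ Q₂ := by
    have h := min_gromovProduct_le_gromovProduct_add hgeo hthin P₀ Q₁ P₁ Q₂
    rw [gromovProduct_comm P₀ Q₁, hs₁.gromovProduct_eq_dist_of_mem hP₁] at h
    have := le_min (show g - 3 * δ ≤ dist P₀ P₁ by linarith) hP₁Q₂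
    linarith
  have := le_min (show g - 6 * δ ≤ dist P₀ P₁ by linarith)
    (le_min (show g - 6 * δ ≤ dist P₀ P₂ by linarith) hQ₁Q₂)
  linarith

end Tripod

end ThinTriangles

theorem stmt_13 :
    ∃ K : ℝ, 0 < K ∧
      ∀ (δ : ℝ), 0 ≤ δ →
      ∀ (X : Type u) (_ : MetricSpace X),
        IsGeodesicMetricSpace X → ThinTriangles X δ →
        ∀ (P₀ Q₁ Q₂ P₁ P₂ : X) (s₁ s₂ : Set X),
          IsGeodesicSegment P₀ Q₁ s₁ → P₁ ∈ s₁ →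
          IsGeodesicSegment P₀ Q₂ s₂ → P₂ ∈ s₂ →
          |dist P₁ P₂ -
              (dist P₀ P₁ + dist P₀ P₂ -
                2 * min (dist P₀ P₁) (min (dist P₀ P₂)
                  ((dist P₀ Q₁ + dist P₀ Q₂ - dist Q₁ Q₂) / 2)))| ≤ K * δ := by
  refine ⟨12, by norm_num, fun δ hδ X _ hgeo hthin P₀ Q₁ Q₂ P₁ P₂ s₁ s₂ hs₁ hP₁ hs₂ hP₂ => ?_⟩
  have lower := min_le_gromovProduct_add hδ hgeo hthin hs₁ hP₁ hs₂ hP₂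
  have upper := gromovProduct_le_min_add hδ hgeo hthin hs₁ hP₁ hs₂ hP₂
  rw [dist_eq_dist_add_dist_sub_two_mul_gromovProduct P₀ P₁ P₂,
    show (dist P₀ Q₁ + dist P₀ Q₂ - dist Q₁ Q₂) / 2 = gromovProduct P₀ Q₁ Q₂ from rfl, abs_le]
  constructor <;> linarith
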